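/- Let G be a finite abelian group, let k and n be positive integers with n ≥ 2k − 1, and let E : ℤ/kℤ → ℤ/nℤ be the map sending (i mod k) to (i mod n) for 0 ≤ i ≤ k−1 (i.e., E(x) is the canonical representative of x reduced mod n). If f : G → ℤ/kℤ is differentially 1-uniform, then E ∘ f : G → ℤ/nℤ is also differentially 1-uniform. -/
import Mathlib


/-- A function `f : G → H` between additive groups is differentially 1-uniform if for
every `(a, b) ≠ (0, 0)` the equation `f (x + a) - f x = b` has at most one solution. -/
def DiffOneUniform {G H : Type*} [AddGroup G] [AddGroup H] (f : G → H) : Prop :=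
  ∀ a : G, ∀ b : H, ¬(a = 0 ∧ b = 0) →
    ∀ x y : G, f (x + a) - f x = b → f (y + a) - f y = b → x = y

/-- Embedding the codomain: if `f : G → ℤ/kℤ` is differentially 1-uniform and
`n ≥ 2k - 1`, then composing with the canonical-representative embedding
`E : ℤ/kℤ → ℤ/nℤ` yields a differentially 1-uniform function `E ∘ f : G → ℤ/nℤ`. -/
theorem diffOneUniform_embed {G : Type*} [AddCommGroup G] (k n : ℕ)
    (hk : 0 < k) (hn : 0 < n) (hkn : 2 * k - 1 ≤ n)
    (f : G → ZMod k) (hf : DiffOneUniform f) :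
    DiffOneUniform ((fun x : ZMod k => ((x.val : ℕ) : ZMod n)) ∘ f) := by
  haveI : NeZero k := ⟨hk.ne'⟩
  haveI : NeZero n := ⟨hn.ne'⟩
  intro a b hab x y hx hy
  simp only [Function.comp_apply] at hx hy
  have ha : a ≠ 0 := by
    rintro rfl
    exact hab ⟨rfl, by rw [← hx]; simp⟩
  have key : f (x + a) - f x = f (y + a) - f y := by
    have h := hx.trans hy.symm
    set u := f (x + a) with hu
    set v := f x with hv
    set u' := f (y + a) with hu'
    set v' := f y with hv'
    have hm : ((u.val : ℤ) - v.val) ≡ ((u'.val : ℤ) - v'.val) [ZMOD n] := by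
      have hz : ((((u.val : ℤ) - v.val) : ℤ) : ZMod n)
          = ((((u'.val : ℤ) - v'.val) : ℤ) : ZMod n) := by
        push_cast
        exact_mod_cast h
      exact (ZMod.intCast_eq_intCast_iff _ _ _).mp hz
    have hdvd : (n : ℤ) ∣ ((u'.val : ℤ) - v'.val) - ((u.val : ℤ) - v.val) :=
      Int.ModEq.dvd hm
    have h1 := ZMod.val_lt u
    have h2 := ZMod.val_lt v
    have h3 := ZMod.val_lt u'
    have h4 := ZMod.val_lt v'
    have hd : ((u.val : ℤ) - v.val) = ((u'.val : ℤ) - v'.val) := by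
      have h0 : ((u'.val : ℤ) - v'.val) - ((u.val : ℤ) - v.val) = 0 := by
        refine Int.eq_zero_of_dvd_of_natAbs_lt_natAbs hdvd ?_
        simp only [Int.natAbs_natCast]
        omega
      omega
    have : ((u.val : ℤ) : ZMod k) - ((v.val : ℤ) : ZMod k)
        = ((u'.val : ℤ) : ZMod k) - ((v'.val : ℤ) : ZMod k) := by
      rw [← Int.cast_sub, ← Int.cast_sub, hd]
    simpa [ZMod.natCast_val, ZMod.cast_id] using this
  exact hf a (f (x + a) - f x) (fun h => ha h.1) x y rfl key.symm
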